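/- With the notation of the codimension-m pointwise algebra for a vector-valued second fundamental form (see context), let c₀ > 1/n, assume f := c₀‖H‖² − ‖A‖² ≠ 0, and set u := ‖Â‖²/f. Then the following identity holds: u·( c₀·|⟨A,H⟩|² − |⟨A,A⟩|² − |R⊥|² ) − |⟨Â,Â⟩|² − |R̂⊥|² − |R⊥(ν₁)|² = (1/(nc₀−1))·f·‖Â‖² + |ḣ·Â|² + (3/2)·‖Â‖⁴ + 2·‖ḣ‖²·‖Â‖² + (2u+1)·( 2‖ḣ‖²‖Â‖² − |ḣ·Â|² − |R⊥(ν₁)|² ) + (u+1)·( (3/2)‖Â‖⁴ − |⟨Â,Â⟩|² − |R̂⊥|² ) + (u+2)·( 1/(nc₀−1) − 3/2 )·‖Â‖⁴ + (u+1)·( nc₀/(nc₀−1) − 4 )·‖ḣ‖²·‖Â‖². -/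

import Mathlib

/-!
Split each `A i j` along the unit normal `ν = H/‖H‖` as `Â i j + h i j • ν` with `Â i j ⊥ ν`.
Every invariant of `A` then separates into a normal and a tangential part:
`‖A‖² = ‖h‖² + ‖Â‖²`, `|⟨A,H⟩|² = ‖H‖²‖h‖²`, `|⟨A,A⟩|² = ‖h‖⁴ + 2|h·Â|² + |⟨Â,Â⟩|²` and
`|R⊥|² = |R̂⊥|² + 2|R⊥(ν)|²`, the last because the curvature matrix of `A` is that of `Â` plus
`ν ∧ W` with `W ⊥ ν`. As `tr h = ‖H‖` and `tr Â = 0`, and `Â` is symmetric, passing from `h` to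
its traceless part `ḣ` only changes `‖h‖² = ‖ḣ‖² + ‖H‖²/n`. What is left is an identity between
rational functions of these invariants.
-/

open Finset
open scoped RealInnerProductSpace

section UnitNormal

variable {E ι : Type*} [NormedAddCommGroup E] [InnerProductSpace ℝ E] [Fintype ι] {ν : E}

theorem real_inner_inv_norm_smul_self {x : E} (hx : x ≠ 0) : ⟪‖x‖⁻¹ • x, ‖x‖⁻¹ • x⟫ = 1 := by
  rw [real_inner_self_eq_norm_sq, norm_smul, norm_inv, norm_norm,
    inv_mul_cancel₀ (norm_ne_zero_iff.mpr hx), one_pow]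

theorem sum_inner_inv_norm_smul_sum (A : ι → E) :
    ∑ i, ⟪A i, ‖∑ i, A i‖⁻¹ • ∑ i, A i⟫ = ‖∑ i, A i‖ := by
  rw [← sum_inner, real_inner_smul_right, real_inner_self_eq_norm_sq]
  by_cases h : ‖∑ i, A i‖ = 0 <;> field_simp [h]

theorem inner_add_smul_add_smul_of_inner_eq_zero (hν : ⟪ν, ν⟫ = 1) {x y : E}
    (hx : ⟪x, ν⟫ = 0) (hy : ⟪y, ν⟫ = 0) (a b : ℝ) :
    ⟪x + a • ν, y + b • ν⟫ = ⟪x, y⟫ + a * b := by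
  simp only [inner_add_left, inner_add_right, real_inner_smul_left, real_inner_smul_right,
    hx, hy, real_inner_comm y ν, hν]
  ring

theorem sum_norm_sq_add_smul (hν : ⟪ν, ν⟫ = 1) {X : ι → ι → E} (hX : ∀ i j, ⟪X i j, ν⟫ = 0)
    (h : ι → ι → ℝ) :
    ∑ i, ∑ j, ‖X i j + h i j • ν‖ ^ 2 = ∑ i, ∑ j, h i j ^ 2 + ∑ i, ∑ j, ‖X i j‖ ^ 2 := by
  simp only [← real_inner_self_eq_norm_sq,
    inner_add_smul_add_smul_of_inner_eq_zero hν (hX _ _) (hX _ _), ← sum_add_distrib]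
  exact sum_congr rfl fun i _ => sum_congr rfl fun j _ => by ring

theorem norm_sq_sum_sum_smul (h : ι → ι → ℝ) (X : ι → ι → E) :
    ‖∑ i, ∑ j, h i j • X i j‖ ^ 2 = ∑ i, ∑ j, ∑ p, ∑ q, h i j * h p q * ⟪X i j, X p q⟫ := by
  simp_rw [← real_inner_self_eq_norm_sq, sum_inner, real_inner_smul_left, inner_sum,
    real_inner_smul_right, mul_sum, mul_assoc]

theorem sum_inner_sq_add_smul (hν : ⟪ν, ν⟫ = 1) {X : ι → ι → E} (hX : ∀ i j, ⟪X i j, ν⟫ = 0)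
    (h : ι → ι → ℝ) :
    ∑ i, ∑ j, ∑ p, ∑ q, ⟪X i j + h i j • ν, X p q + h p q • ν⟫ ^ 2
      = (∑ i, ∑ j, h i j ^ 2) ^ 2 + 2 * ‖∑ i, ∑ j, h i j • X i j‖ ^ 2
        + ∑ i, ∑ j, ∑ p, ∑ q, ⟪X i j, X p q⟫ ^ 2 := by
  simp only [inner_add_smul_add_smul_of_inner_eq_zero hν (hX _ _) (hX _ _),
    norm_sq_sum_sum_smul, sq (∑ i, ∑ j, h i j ^ 2), sum_mul, mul_sum, ← sum_add_distrib]
  exact sum_congr rfl fun i _ => sum_congr rfl fun j _ => sum_congr rfl fun p _ =>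
    sum_congr rfl fun q _ => by ring

end UnitNormal

section Curvature

variable {ι κ : Type*} [Fintype ι] [Fintype κ]

theorem EuclideanSpace.real_inner_eq_sum_mul (x y : EuclideanSpace ℝ κ) :
    ⟪x, y⟫ = ∑ α, x α * y α := by
  simp [PiLp.inner_apply, mul_comm]

theorem sum_sq_add_mul_sub_mul (R : κ → κ → ℝ) (ν W : κ → ℝ)
    (hν : ∑ α, ν α ^ 2 = 1) (hνW : ∑ α, ν α * W α = 0)
    (hνR : ∀ β, ∑ α, ν α * R α β = 0) (hRν : ∀ α, ∑ β, R α β * ν β = 0) :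
    ∑ α, ∑ β, (R α β + ν α * W β - ν β * W α) ^ 2
      = ∑ α, ∑ β, R α β ^ 2 + 2 * ∑ α, W α ^ 2 := by
  have expand : ∀ α β, (R α β + ν α * W β - ν β * W α) ^ 2
      = R α β ^ 2 + ν α ^ 2 * W β ^ 2 + ν β ^ 2 * W α ^ 2 + 2 * (ν α * R α β) * W β
        - 2 * (R α β * ν β) * W α - 2 * (ν α * W α) * (ν β * W β) := fun α β => by ring
  simp only [expand, sum_add_distrib, sum_sub_distrib, ← mul_sum, ← sum_mul]
  rw [sum_comm (f := fun α β => 2 * (ν α * R α β) * W β)]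
  simp only [← sum_mul, ← mul_sum, hν, hνR, hRν, hνW]
  ring

theorem sum_mul_sum_wedge_eq_zero (ν : κ → ℝ) (x y : ι → κ → ℝ)
    (hx : ∀ k, ∑ α, ν α * x k α = 0) (hy : ∀ k, ∑ α, ν α * y k α = 0) (β : κ) :
    ∑ α, ν α * ∑ k, (x k α * y k β - y k α * x k β) = 0 := by
  calc ∑ α, ν α * ∑ k, (x k α * y k β - y k α * x k β)
      = ∑ k, ((∑ α, ν α * x k α) * y k β - (∑ α, ν α * y k α) * x k β) := by
        simp only [mul_sum, sum_mul, ← sum_sub_distrib]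
        rw [sum_comm]
        exact sum_congr rfl fun k _ => sum_congr rfl fun α _ => by ring
    _ = 0 := by simp [hx, hy]

theorem sum_sq_wedge_add_smul {ν : EuclideanSpace ℝ κ} (hν : ⟪ν, ν⟫ = 1)
    (x y : ι → EuclideanSpace ℝ κ) (a b : ι → ℝ)
    (hx : ∀ k, ⟪x k, ν⟫ = 0) (hy : ∀ k, ⟪y k, ν⟫ = 0) :
    ∑ α, ∑ β, (∑ k, ((x k + a k • ν) α * (y k + b k • ν) β
        - (y k + b k • ν) α * (x k + a k • ν) β)) ^ 2
      = ∑ α, ∑ β, (∑ k, (x k α * y k β - y k α * x k β)) ^ 2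
        + 2 * ‖∑ k, (a k • y k - b k • x k)‖ ^ 2 := by
  set W := ∑ k, (a k • y k - b k • x k)
  have hW : ∀ γ, W γ = ∑ k, (a k * y k γ - b k * x k γ) := fun γ => by
    simp [W, WithLp.ofLp_sum]
  have split : ∀ α β, ∑ k, ((x k + a k • ν) α * (y k + b k • ν) β
      - (y k + b k • ν) α * (x k + a k • ν) β)
      = ∑ k, (x k α * y k β - y k α * x k β) + ν α * W β - ν β * W α := fun α β => by
    simp only [hW, mul_sum, ← sum_sub_distrib, ← sum_add_distrib, PiLp.add_apply,
      PiLp.smul_apply, smul_eq_mul]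
    exact sum_congr rfl fun k _ => by ring
  have hνx : ∀ k, ∑ α, ν α * x k α = 0 := fun k => by
    rw [← EuclideanSpace.real_inner_eq_sum_mul, real_inner_comm, hx]
  have hνy : ∀ k, ∑ α, ν α * y k α = 0 := fun k => by
    rw [← EuclideanSpace.real_inner_eq_sum_mul, real_inner_comm, hy]
  simp only [split]
  rw [EuclideanSpace.real_norm_sq_eq]
  refine sum_sq_add_mul_sub_mul _ _ _ ?_ ?_ (sum_mul_sum_wedge_eq_zero _ _ _ hνx hνy) ?_
  · simpa only [EuclideanSpace.real_inner_eq_sum_mul, sq] using hν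
  · rw [← EuclideanSpace.real_inner_eq_sum_mul, real_inner_comm, sum_inner]
    simp [inner_sub_left, real_inner_smul_left, hx, hy]
  · intro α
    rw [← sum_mul_sum_wedge_eq_zero _ _ _ hνy hνx α]
    exact sum_congr rfl fun β _ =>
      (mul_comm _ _).trans (congrArg _ (sum_congr rfl fun k _ => by ring))

end Curvature

section TracelessPart

variable {ι : Type*} [Fintype ι] [DecidableEq ι]

theorem sum_sub_diag_smul {M : Type*} [AddCommGroup M] [Module ℝ M] (g : ι → ℝ) (c : ℝ)
    (i : ι) (X : ι → M) :
    ∑ k, (g k - c * if i = k then 1 else 0) • X k = ∑ k, g k • X k - c • X i := by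
  simp [sub_smul, sum_sub_distrib, ite_smul]

theorem sum_sum_sub_diag_sq (g : ι → ι → ℝ) (c : ℝ) :
    ∑ i, ∑ j, (g i j - c * if i = j then 1 else 0) ^ 2
      = ∑ i, ∑ j, g i j ^ 2 - 2 * c * ∑ i, g i i + Fintype.card ι * c ^ 2 := by
  have expand : ∀ i j, (g i j - c * if i = j then 1 else 0) ^ 2
      = g i j ^ 2 + (c ^ 2 - 2 * c * g i j) * if i = j then 1 else 0 := fun i j => by
    split_ifs <;> ring
  simp_rw [expand, sum_add_distrib, mul_ite, mul_one, mul_zero, sum_ite_eq, mem_univ, if_true]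
  simp only [sum_sub_distrib, ← mul_sum, sum_const, card_univ, nsmul_eq_mul]
  ring

theorem sum_sum_sub_diag_smul {M : Type*} [AddCommGroup M] [Module ℝ M] (g : ι → ι → ℝ)
    (c : ℝ) (X : ι → ι → M) :
    ∑ i, ∑ j, (g i j - c * if i = j then 1 else 0) • X i j
      = ∑ i, ∑ j, g i j • X i j - c • ∑ i, X i i := by
  simp only [sum_sub_diag_smul, sum_sub_distrib, smul_sum]

theorem sum_sub_diag_smul_sub_smul {M : Type*} [AddCommGroup M] [Module ℝ M]
    (g : ι → ι → ℝ) (c : ℝ) (X : ι → ι → M) (i j : ι) :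
    ∑ k, ((g i k - c * if i = k then 1 else 0) • X j k
        - (g j k - c * if j = k then 1 else 0) • X i k)
      = ∑ k, (g i k • X j k - g j k • X i k) - c • (X j i - X i j) := by
  rw [sum_sub_distrib, sum_sub_diag_smul, sum_sub_diag_smul, sum_sub_distrib, smul_sub]
  abel

end TracelessPart

theorem reaction_identity_of_invariants {n c₀ Hsq hsq Asq D S Rh Rν f u : ℝ}
    (hn : 0 < n) (hc₀ : 1 / n < c₀) (hf0 : f ≠ 0)
    (hf : f = c₀ * Hsq - (hsq + Hsq / n + Asq)) (hu : u = Asq / f) :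
    u * (c₀ * (Hsq * (hsq + Hsq / n)) - ((hsq + Hsq / n) ^ 2 + 2 * D + S) - (Rh + 2 * Rν))
        - S - Rh - Rν
      = (1 / (n * c₀ - 1)) * f * Asq + D + (3 / 2) * Asq ^ 2 + 2 * hsq * Asq
        + (2 * u + 1) * (2 * hsq * Asq - D - Rν)
        + (u + 1) * ((3 / 2) * Asq ^ 2 - S - Rh)
        + (u + 2) * (1 / (n * c₀ - 1) - 3 / 2) * Asq ^ 2
        + (u + 1) * (n * c₀ / (n * c₀ - 1) - 4) * hsq * Asq := by
  have hc : c₀ * n - 1 ≠ 0 := by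
    rw [div_lt_iff₀' hn] at hc₀
    linarith
  obtain rfl : hsq = c₀ * Hsq - Hsq / n - Asq - f := by linarith
  subst hu
  rw [mul_comm n]
  field_simp
  ring

theorem stmt_13_general (n m : ℕ) (hn : 2 ≤ n)
    (c₀ : ℝ) (hc₀ : 1 / (n : ℝ) < c₀)
    (A : Fin n → Fin n → EuclideanSpace ℝ (Fin m))
    (hA : ∀ i j, A i j = A j i)
    (H : EuclideanSpace ℝ (Fin m)) (hHdef : H = ∑ i, A i i) (hH0 : H ≠ 0)
    (ν : EuclideanSpace ℝ (Fin m)) (hν : ν = ‖H‖⁻¹ • H)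
    (h : Fin n → Fin n → ℝ) (hh : ∀ i j, h i j = ⟪A i j, ν⟫)
    (h' : Fin n → Fin n → ℝ)
    (hh' : ∀ i j, h' i j = h i j - (‖H‖ / (n : ℝ)) * (if i = j then 1 else 0))
    (Ahat : Fin n → Fin n → EuclideanSpace ℝ (Fin m))
    (hAhat : ∀ i j, Ahat i j = A i j - (h i j) • ν)
    (normA2 : ℝ) (hnormA2 : normA2 = ∑ i, ∑ j, ‖A i j‖ ^ 2)
    (normAhat2 : ℝ) (hnormAhat2 : normAhat2 = ∑ i, ∑ j, ‖Ahat i j‖ ^ 2)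
    (normh'2 : ℝ) (hnormh'2 : normh'2 = ∑ i, ∑ j, (h' i j) ^ 2)
    (f : ℝ) (hf : f = c₀ * ‖H‖ ^ 2 - normA2) (hf0 : f ≠ 0)
    (u : ℝ) (hu : u = normAhat2 / f)
    (AH2 : ℝ) (hAH2 : AH2 = ∑ i, ∑ j, ⟪A i j, H⟫ ^ 2)
    (AA2 : ℝ) (hAA2 : AA2 = ∑ i, ∑ j, ∑ p, ∑ q, ⟪A i j, A p q⟫ ^ 2)
    (AhatAhat2 : ℝ)
    (hAhatAhat2 : AhatAhat2 = ∑ i, ∑ j, ∑ p, ∑ q, ⟪Ahat i j, Ahat p q⟫ ^ 2)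
    (Rperp2 : ℝ)
    (hRperp2 : Rperp2 = ∑ i, ∑ j, ∑ α, ∑ β,
      (∑ k, (A i k α * A j k β - A j k α * A i k β)) ^ 2)
    (Rhatperp2 : ℝ)
    (hRhatperp2 : Rhatperp2 = ∑ i, ∑ j, ∑ α, ∑ β,
      (∑ k, (Ahat i k α * Ahat j k β - Ahat j k α * Ahat i k β)) ^ 2)
    (Rperpν2 : ℝ)
    (hRperpν2 : Rperpν2 = ∑ i, ∑ j,
      ‖∑ k, ((h' i k) • (Ahat j k) - (h' j k) • (Ahat i k))‖ ^ 2)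
    (hdotAhat2 : ℝ)
    (hhdotAhat2 : hdotAhat2 = ‖∑ i, ∑ j, (h' i j) • (Ahat i j)‖ ^ 2) :
    u * (c₀ * AH2 - AA2 - Rperp2) - AhatAhat2 - Rhatperp2 - Rperpν2
      = (1 / ((n : ℝ) * c₀ - 1)) * f * normAhat2
        + hdotAhat2
        + (3 / 2) * normAhat2 ^ 2
        + 2 * normh'2 * normAhat2
        + (2 * u + 1) * (2 * normh'2 * normAhat2 - hdotAhat2 - Rperpν2)
        + (u + 1) * ((3 / 2) * normAhat2 ^ 2 - AhatAhat2 - Rhatperp2)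
        + (u + 2) * (1 / ((n : ℝ) * c₀ - 1) - 3 / 2) * normAhat2 ^ 2
        + (u + 1) * ((n : ℝ) * c₀ / ((n : ℝ) * c₀ - 1) - 4) * normh'2 * normAhat2 := by
  have hHn : ‖H‖ ≠ 0 := norm_ne_zero_iff.mpr hH0
  have hνν : ⟪ν, ν⟫ = 1 := hν ▸ real_inner_inv_norm_smul_self hH0
  have hAhatν : ∀ i j, ⟪Ahat i j, ν⟫ = 0 := fun i j => by
    rw [hAhat, inner_sub_left, real_inner_smul_left, hνν, hh, mul_one, sub_self]
  have hAsplit : ∀ i j, A i j = Ahat i j + h i j • ν := fun i j => by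
    rw [hAhat, sub_add_cancel]
  have hAhat_symm : ∀ i j, Ahat i j - Ahat j i = 0 := fun i j => by
    rw [hAhat, hAhat, hh, hh, hA, sub_self]
  have htr_h : ∑ i, h i i = ‖H‖ := by
    simp only [hh, hν, hHdef, sum_inner_inv_norm_smul_sum]
  have htr_Ahat : ∑ i, Ahat i i = 0 := by
    simp only [hAhat, sum_sub_distrib, ← sum_smul, htr_h, ← hHdef, hν,
      smul_inv_smul₀ hHn, sub_self]
  have hh2 : ∑ i, ∑ j, h i j ^ 2 = normh'2 + ‖H‖ ^ 2 / n := by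
    rw [hnormh'2]
    simp only [hh', sum_sum_sub_diag_sq, htr_h, Fintype.card_fin]
    field_simp
    ring
  have hnormA : normA2 = ∑ i, ∑ j, h i j ^ 2 + normAhat2 := by
    simp only [hnormA2, hnormAhat2, hAsplit, sum_norm_sq_add_smul hνν hAhatν]
  have hAH : AH2 = ‖H‖ ^ 2 * ∑ i, ∑ j, h i j ^ 2 := by
    have hAH_ij : ∀ i j, ⟪A i j, H⟫ = ‖H‖ * h i j := fun i j => by
      rw [hh, hν, real_inner_smul_right, mul_inv_cancel_left₀ hHn]
    simp only [hAH2, hAH_ij, mul_pow, ← mul_sum]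
  have hAA : AA2 = (∑ i, ∑ j, h i j ^ 2) ^ 2 + 2 * hdotAhat2 + AhatAhat2 := by
    simp only [hAA2, hAhatAhat2, hhdotAhat2, hh', sum_sum_sub_diag_smul, htr_Ahat, smul_zero,
      sub_zero, hAsplit, sum_inner_sq_add_smul hνν hAhatν]
  have hR : Rperp2 = Rhatperp2 + 2 * Rperpν2 := by
    simp only [hRperp2, hRhatperp2, hRperpν2, hAsplit, hh', sum_sub_diag_smul_sub_smul,
      hAhat_symm, smul_zero, sub_zero, mul_sum, ← sum_add_distrib,
      fun i j => sum_sq_wedge_add_smul hνν (Ahat i) (Ahat j) (h i) (h j) (hAhatν i) (hAhatν j)]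
  rw [hAH, hAA, hR, hh2]
  exact reaction_identity_of_invariants (by positivity) hc₀ hf0 (by rw [hf, hnormA, hh2]) hu

/-- The reaction-term identity from Appendix B.2 of the paper, governing the
reaction terms in the evolution of `u = |Â|²/f` in the planarity estimate. -/
theorem stmt_13 (n m : ℕ) (hn : 2 ≤ n) (hm : 1 ≤ m)
    (c₀ : ℝ) (hc₀ : 1 / (n : ℝ) < c₀)
    (A : Fin n → Fin n → EuclideanSpace ℝ (Fin m))
    (hA : ∀ i j, A i j = A j i)
    (H : EuclideanSpace ℝ (Fin m)) (hHdef : H = ∑ i, A i i) (hH0 : H ≠ 0)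
    (ν : EuclideanSpace ℝ (Fin m)) (hν : ν = ‖H‖⁻¹ • H)
    (h : Fin n → Fin n → ℝ) (hh : ∀ i j, h i j = ⟪A i j, ν⟫)
    (h' : Fin n → Fin n → ℝ)
    (hh' : ∀ i j, h' i j = h i j - (‖H‖ / (n : ℝ)) * (if i = j then 1 else 0))
    (Ahat : Fin n → Fin n → EuclideanSpace ℝ (Fin m))
    (hAhat : ∀ i j, Ahat i j = A i j - (h i j) • ν)
    (normA2 : ℝ) (hnormA2 : normA2 = ∑ i, ∑ j, ‖A i j‖ ^ 2)
    (normAhat2 : ℝ) (hnormAhat2 : normAhat2 = ∑ i, ∑ j, ‖Ahat i j‖ ^ 2)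
    (normh'2 : ℝ) (hnormh'2 : normh'2 = ∑ i, ∑ j, (h' i j) ^ 2)
    (f : ℝ) (hf : f = c₀ * ‖H‖ ^ 2 - normA2) (hf0 : f ≠ 0)
    (u : ℝ) (hu : u = normAhat2 / f)
    (AH2 : ℝ) (hAH2 : AH2 = ∑ i, ∑ j, ⟪A i j, H⟫ ^ 2)
    (AA2 : ℝ) (hAA2 : AA2 = ∑ i, ∑ j, ∑ p, ∑ q, ⟪A i j, A p q⟫ ^ 2)
    (AhatAhat2 : ℝ)
    (hAhatAhat2 : AhatAhat2 = ∑ i, ∑ j, ∑ p, ∑ q, ⟪Ahat i j, Ahat p q⟫ ^ 2)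
    (Rperp2 : ℝ)
    (hRperp2 : Rperp2 = ∑ i, ∑ j, ∑ α, ∑ β,
      (∑ k, (A i k α * A j k β - A j k α * A i k β)) ^ 2)
    (Rhatperp2 : ℝ)
    (hRhatperp2 : Rhatperp2 = ∑ i, ∑ j, ∑ α, ∑ β,
      (∑ k, (Ahat i k α * Ahat j k β - Ahat j k α * Ahat i k β)) ^ 2)
    (Rperpν2 : ℝ)
    (hRperpν2 : Rperpν2 = ∑ i, ∑ j,
      ‖∑ k, ((h' i k) • (Ahat j k) - (h' j k) • (Ahat i k))‖ ^ 2)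
    (hdotAhat2 : ℝ)
    (hhdotAhat2 : hdotAhat2 = ‖∑ i, ∑ j, (h' i j) • (Ahat i j)‖ ^ 2) :
    u * (c₀ * AH2 - AA2 - Rperp2) - AhatAhat2 - Rhatperp2 - Rperpν2
      = (1 / ((n : ℝ) * c₀ - 1)) * f * normAhat2
        + hdotAhat2
        + (3 / 2) * normAhat2 ^ 2
        + 2 * normh'2 * normAhat2
        + (2 * u + 1) * (2 * normh'2 * normAhat2 - hdotAhat2 - Rperpν2)
        + (u + 1) * ((3 / 2) * normAhat2 ^ 2 - AhatAhat2 - Rhatperp2)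
        + (u + 2) * (1 / ((n : ℝ) * c₀ - 1) - 3 / 2) * normAhat2 ^ 2
        + (u + 1) * ((n : ℝ) * c₀ / ((n : ℝ) * c₀ - 1) - 4) * normh'2 * normAhat2 :=
  stmt_13_general n m hn c₀ hc₀ A hA H hHdef hH0 ν hν h hh h' hh' Ahat hAhat normA2 hnormA2
    normAhat2 hnormAhat2 normh'2 hnormh'2 f hf hf0 u hu AH2 hAH2 AA2 hAA2 AhatAhat2 hAhatAhat2
    Rperp2 hRperp2 Rhatperp2 hRhatperp2 Rperpν2 hRperpν2 hdotAhat2 hhdotAhat2
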